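/- (Key step in the proof of Theorem 2(a)) Assume (C1); assume there exist φ₁, ψ₁ ∈ H_sm with ‖φ₁‖ = ‖ψ₁‖ = 1 such that L(φ₁, ψ₁) = λ₀ := sup{L(u,v) : u, v ∈ H}, σ²_X(φ₁) > 0 and σ²_Y(ψ₁) > 0; assume the sieve setup with d_n → ∞, and that τ_n ≥ 0, τ_n → 0, τ_n Ψ(Π_{H_{d_n}} φ₁) → 0 and τ_n Ψ(Π_{H_{d_n}} ψ₁) → 0. Then L_{τ_n}(Π_{H_{d_n}}φ₁/‖Π_{H_{d_n}}φ₁‖, Π_{H_{d_n}}ψ₁/‖Π_{H_{d_n}}ψ₁‖) → λ₀, and consequently λ_{κ_n} := sup{L_{τ_n}(u,v) : u, v ∈ H_{d_n}, u ≠ 0, v ≠ 0} → λ₀ as n → ∞. -/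

import Mathlib

/-!
The projections `Π_{H_d} φ₁, Π_{H_d} ψ₁` converge to `φ₁, ψ₁` in `H` (Parseval for the
Hilbert basis `ξ`). Since `σ²` and `γ` are continuous and the penalty terms vanish, the
penalized association at the projections tends to `L(φ₁, ψ₁) = λ₀`, and it is unchanged by
normalizing its arguments. For `τ ≥ 0` the penalty only enlarges the denominator, so
`L_τ ≤ L ≤ λ₀` (Cauchy–Schwarz for the positive block operator bounds `L` by `1` and forces
`γ = 0` where a scale vanishes); this squeezes the sieve supremum `λ_κ` between the
penalized association at the projections and `λ₀`.
-/

open Filter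
open scoped RealInnerProductSpace Topology

namespace RSCCA

variable {H : Type*} [NormedAddCommGroup H] [InnerProductSpace ℝ H]

/-- The scale functional `σ²(u) = ⟪u, G u⟫` associated with a diagonal block `G`. -/
noncomputable def sigSq (G : H →L[ℝ] H) (u : H) : ℝ := ⟪u, G u⟫

/-- The co-association functional `γ(u,v) = ⟪u, G12 v⟫`. -/
noncomputable def gam (G12 : H →L[ℝ] H) (u v : H) : ℝ := ⟪u, G12 v⟫

/-- The squared association `L(u,v) = γ(u,v)²/(σ²_X(u) σ²_Y(v))`.  In `ℝ`, division by `0`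
equals `0`, which matches the convention `L(u,v) = 0` whenever `σ²_X(u) = 0` or
`σ²_Y(v) = 0` (the factors are nonnegative under (C1)). -/
noncomputable def Lfun (G11 G12 G22 : H →L[ℝ] H) (u v : H) : ℝ :=
  gam G12 u v ^ 2 / (sigSq G11 u * sigSq G22 v)

/-- `λ₀ = sup {L(u,v) : u, v ∈ H}`. -/
noncomputable def lam0 (G11 G12 G22 : H →L[ℝ] H) : ℝ :=
  sSup {x : ℝ | ∃ u v : H, x = Lfun G11 G12 G22 u v}

/-- `L^X(u₁,u₂)` (and `L^Y`, by using the block `Γ₂₂`). -/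
noncomputable def LXfun (G : H →L[ℝ] H) (u₁ u₂ : H) : ℝ :=
  ⟪u₁, G u₂⟫ ^ 2 / (⟪u₁, G u₁⟫ * ⟪u₂, G u₂⟫)

/-- (C1): `G11, G12, G21, G22` are the blocks of a self-adjoint, positive semidefinite,
compact bounded linear operator on `H × H` (stated blockwise, which is equivalent). -/
structure C1 (G11 G12 G21 G22 : H →L[ℝ] H) : Prop where
  sa11 : ∀ u v : H, ⟪G11 u, v⟫ = ⟪u, G11 v⟫
  sa22 : ∀ u v : H, ⟪G22 u, v⟫ = ⟪u, G22 v⟫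
  adj : ∀ u v : H, ⟪u, G12 v⟫ = ⟪G21 u, v⟫
  pos : ∀ u v : H, 0 ≤ ⟪u, G11 u⟫ + 2 * ⟪u, G12 v⟫ + ⟪v, G22 v⟫
  cpt11 : IsCompactOperator (⇑G11)
  cpt12 : IsCompactOperator (⇑G12)
  cpt21 : IsCompactOperator (⇑G21)
  cpt22 : IsCompactOperator (⇑G22)

/-- The penalty functional `Ψ(u) = ‖D u‖²` on the smooth subspace. -/
noncomputable def Psi {Hsm : Submodule ℝ H} (D : Hsm →ₗ[ℝ] H) (u : Hsm) : ℝ := ‖D u‖ ^ 2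

/-- The penalized association `L_τ(u,v)` on the smooth subspace. -/
noncomputable def Lpen (G11 G12 G22 : H →L[ℝ] H) {Hsm : Submodule ℝ H} (D : Hsm →ₗ[ℝ] H)
    (τ : ℝ) (u v : Hsm) : ℝ :=
  gam G12 (u : H) (v : H) ^ 2 /
    ((sigSq G11 (u : H) + τ * Psi D u) * (sigSq G22 (v : H) + τ * Psi D v))

/-- (C2): existence of first canonical directions `φ₁, ψ₁`, maximality, spectral gap and
uniqueness up to sign. -/
structure C2 (G11 G12 G22 : H →L[ℝ] H) {Hsm : Submodule ℝ H} (φ₁ ψ₁ : Hsm) (ρ₀ : ℝ) :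
    Prop where
  norm_phi : ‖(φ₁ : H)‖ = 1
  norm_psi : ‖(ψ₁ : H)‖ = 1
  rho_pos : 0 < ρ₀
  max_val : Lfun G11 G12 G22 (φ₁ : H) (ψ₁ : H) = ρ₀ ^ 2
  le_max : ∀ u v : H, Lfun G11 G12 G22 u v ≤ ρ₀ ^ 2
  gap : ∃ ρ₁ : ℝ, 0 ≤ ρ₁ ∧ ρ₁ < ρ₀ ∧ ∀ u v : H,
    ⟪u, G11 (φ₁ : H)⟫ = 0 → ⟪v, G22 (ψ₁ : H)⟫ = 0 → Lfun G11 G12 G22 u v ≤ ρ₁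
  unique : ∀ φ ψ : Hsm, ‖(φ : H)‖ = 1 → ‖(ψ : H)‖ = 1 →
    Lfun G11 G12 G22 (φ : H) (ψ : H) = ρ₀ ^ 2 → (φ = φ₁ ∧ ψ = ψ₁) ∨ (φ = -φ₁ ∧ ψ = -ψ₁)

/-- (C3a). -/
def C3a (G11 G22 : H →L[ℝ] H) {Hsm : Submodule ℝ H} (D : Hsm →ₗ[ℝ] H) : Prop :=
  ∀ u : Hsm, u ≠ 0 → Psi D u = 0 → 0 < sigSq G11 (u : H) ∧ 0 < sigSq G22 (u : H)

/-- (C3b): the null space `N` of `Ψ` is finite dimensional and `Ψ` dominates `d ‖·‖²`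
on `H_sm ∩ N^⊥`. -/
def C3b {Hsm : Submodule ℝ H} (D : Hsm →ₗ[ℝ] H) : Prop :=
  FiniteDimensional ℝ (LinearMap.ker D) ∧
    ∃ d : ℝ, 0 < d ∧ ∀ u : Hsm, u ≠ 0 →
      (u : H) ∈ ((LinearMap.ker D).map Hsm.subtype)ᗮ → d * ‖(u : H)‖ ^ 2 < Psi D u

/-- Sample setup: nonnegativity and (bi)homogeneity of the sample scale and
co-association functionals. -/
structure SampleSetup {Hsm : Submodule ℝ H} (sX sY : Hsm → ℝ) (g : Hsm → Hsm → ℝ) :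
    Prop where
  sX_nonneg : ∀ u, 0 ≤ sX u
  sY_nonneg : ∀ v, 0 ≤ sY v
  sX_homog : ∀ (a : ℝ) (u), sX (a • u) = a ^ 2 * sX u
  sY_homog : ∀ (a : ℝ) (v), sY (a • v) = a ^ 2 * sY v
  g_homog : ∀ (a b : ℝ) (u v), g (a • u) (b • v) = a * b * g u v

/-- The empirical penalized association `L̂_τ(u,v)`. -/
noncomputable def Lhat {Hsm : Submodule ℝ H} (D : Hsm →ₗ[ℝ] H) (sX sY : Hsm → ℝ)
    (g : Hsm → Hsm → ℝ) (τ : ℝ) (u v : Hsm) : ℝ :=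
  g u v ^ 2 / ((sX u + τ * Psi D u) * (sY v + τ * Psi D v))

/-- `C_{n,X}` (resp. `C_{n,Y}` taking `G = Γ₂₂`, `s = s²_{n,Y}`): the supremum of
`|s²_n(u) − σ²(u)|` over `u ∈ H_sm` with `‖u‖²_{τ} = σ²(u) + τΨ(u) = 1`. -/
noncomputable def Cerr (G : H →L[ℝ] H) {Hsm : Submodule ℝ H} (D : Hsm →ₗ[ℝ] H)
    (s : Hsm → ℝ) (τ : ℝ) : ℝ :=
  sSup {x : ℝ | ∃ u : Hsm, sigSq G (u : H) + τ * Psi D u = 1 ∧ x = |s u - sigSq G (u : H)|}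

/-- `C_{n,XY}`. -/
noncomputable def CerrXY (G11 G12 G22 : H →L[ℝ] H) {Hsm : Submodule ℝ H}
    (D : Hsm →ₗ[ℝ] H) (g : Hsm → Hsm → ℝ) (τ : ℝ) : ℝ :=
  sSup {x : ℝ | ∃ u v : Hsm, sigSq G11 (u : H) + τ * Psi D u = 1 ∧
    sigSq G22 (v : H) + τ * Psi D v = 1 ∧ x = |g u v - gam G12 (u : H) (v : H)|}

/-- (C4a). -/
def C4a (G11 G12 G22 : H →L[ℝ] H) {Hsm : Submodule ℝ H} (D : Hsm →ₗ[ℝ] H)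
    (sX sY : ℕ → Hsm → ℝ) (g : ℕ → Hsm → Hsm → ℝ) (τ : ℕ → ℝ) : Prop :=
  (∀ n, 0 ≤ τ n) ∧ Tendsto τ atTop (𝓝 0) ∧
    Tendsto (fun n => Cerr G11 D (sX n) (τ n)) atTop (𝓝 0) ∧
    Tendsto (fun n => Cerr G22 D (sY n) (τ n)) atTop (𝓝 0) ∧
    Tendsto (fun n => CerrXY G11 G12 G22 D (g n) (τ n)) atTop (𝓝 0) ∧
    ∃ A : ℝ, 0 < A ∧ ∀ (n : ℕ) (u v : Hsm), u ≠ 0 → v ≠ 0 →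
      Lhat D (sX n) (sY n) (g n) (τ n) u v ≤ A

/-- (C4b). -/
def C4b (G11 G12 G22 : H →L[ℝ] H) {Hsm : Submodule ℝ H} (D : Hsm →ₗ[ℝ] H)
    (sX sY : ℕ → Hsm → ℝ) (g : ℕ → Hsm → Hsm → ℝ) (τ : ℕ → ℝ) : Prop :=
  (∀ n, 0 ≤ τ n) ∧ Tendsto τ atTop (𝓝 0) ∧
    Tendsto (fun n => Cerr G11 D (sX n) (τ n)) atTop (𝓝 0) ∧
    Tendsto (fun n => Cerr G22 D (sY n) (τ n)) atTop (𝓝 0) ∧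
    ∃ (r : ℕ → Hsm → Hsm → ℝ) (ρXY : H → H → ℝ),
      (∀ n u v, |r n u v| ≤ 1) ∧ (∀ u v, |ρXY u v| ≤ 1) ∧
      (∀ n u v, g n u v = r n u v * Real.sqrt (sX n u) * Real.sqrt (sY n v)) ∧
      (∀ u v : H, gam G12 u v = ρXY u v * Real.sqrt (sigSq G11 u) * Real.sqrt (sigSq G22 v)) ∧
      Tendsto (fun n => sSup {x : ℝ | ∃ u v : Hsm, ‖(u : H)‖ = 1 ∧ ‖(v : H)‖ = 1 ∧
        x = |r n u v - ρXY (u : H) (v : H)|}) atTop (𝓝 0)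

/-- The sieve space `H_d`, spanned by the first `d` basis elements. -/
def Hd (ξ : ℕ → H) (d : ℕ) : Submodule ℝ H := Submodule.span ℝ (ξ '' Set.Iio d)

/-- The orthogonal projection `Π_{H_d} u`, as an element of `H_sm`
(each basis element lies in `H_sm`). -/
noncomputable def projSm {Hsm : Submodule ℝ H} (ξ : ℕ → H) (hξ : ∀ i, ξ i ∈ Hsm)
    (d : ℕ) (u : H) : Hsm :=
  ∑ i ∈ Finset.range d, ⟪ξ i, u⟫ • (⟨ξ i, hξ i⟩ : Hsm)

/-- Sieve setup: `ξ` is an orthonormal basis of `H` whose elements are smooth, and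
`d_n → ∞`. -/
structure SieveSetup (Hsm : Submodule ℝ H) (ξ : ℕ → H) (dn : ℕ → ℕ) : Prop where
  orth : Orthonormal ℝ ξ
  total : (Submodule.span ℝ (Set.range ξ)).topologicalClosure = ⊤
  mem : ∀ i, ξ i ∈ Hsm
  dn_tendsto : Tendsto dn atTop atTop

/-- `D_{n,X}` (resp. `D_{n,Y}`). -/
noncomputable def Derr (G : H →L[ℝ] H) {Hsm : Submodule ℝ H} (D : Hsm →ₗ[ℝ] H)
    (ξ : ℕ → H) (d : ℕ) (s : Hsm → ℝ) (τ : ℝ) : ℝ :=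
  sSup {x : ℝ | ∃ u : Hsm, (u : H) ∈ Hd ξ d ∧ sigSq G (u : H) + τ * Psi D u = 1 ∧
    x = |s u - sigSq G (u : H)|}

/-- `D_{n,XY}`. -/
noncomputable def DerrXY (G11 G12 G22 : H →L[ℝ] H) {Hsm : Submodule ℝ H}
    (D : Hsm →ₗ[ℝ] H) (ξ : ℕ → H) (d : ℕ) (g : Hsm → Hsm → ℝ) (τ : ℝ) : ℝ :=
  sSup {x : ℝ | ∃ u v : Hsm, (u : H) ∈ Hd ξ d ∧ (v : H) ∈ Hd ξ d ∧
    sigSq G11 (u : H) + τ * Psi D u = 1 ∧ sigSq G22 (v : H) + τ * Psi D v = 1 ∧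
    x = |g u v - gam G12 (u : H) (v : H)|}

/-- (C5a). -/
def C5a (G11 G12 G22 : H →L[ℝ] H) {Hsm : Submodule ℝ H} (D : Hsm →ₗ[ℝ] H)
    (ξ : ℕ → H) (dn : ℕ → ℕ) (sX sY : ℕ → Hsm → ℝ) (g : ℕ → Hsm → Hsm → ℝ)
    (τ : ℕ → ℝ) : Prop :=
  (∀ n, 0 ≤ τ n) ∧ Tendsto τ atTop (𝓝 0) ∧
    Tendsto (fun n => Derr G11 D ξ (dn n) (sX n) (τ n)) atTop (𝓝 0) ∧
    Tendsto (fun n => Derr G22 D ξ (dn n) (sY n) (τ n)) atTop (𝓝 0) ∧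
    Tendsto (fun n => DerrXY G11 G12 G22 D ξ (dn n) (g n) (τ n)) atTop (𝓝 0) ∧
    ∃ A : ℝ, 0 < A ∧ ∀ (n : ℕ) (u v : Hsm), u ≠ 0 → v ≠ 0 →
      Lhat D (sX n) (sY n) (g n) (τ n) u v ≤ A

/-- (C5b). -/
def C5b (G11 G12 G22 : H →L[ℝ] H) {Hsm : Submodule ℝ H} (D : Hsm →ₗ[ℝ] H)
    (ξ : ℕ → H) (dn : ℕ → ℕ) (sX sY : ℕ → Hsm → ℝ) (g : ℕ → Hsm → Hsm → ℝ)
    (τ : ℕ → ℝ) : Prop :=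
  (∀ n, 0 ≤ τ n) ∧ Tendsto τ atTop (𝓝 0) ∧
    Tendsto (fun n => Derr G11 D ξ (dn n) (sX n) (τ n)) atTop (𝓝 0) ∧
    Tendsto (fun n => Derr G22 D ξ (dn n) (sY n) (τ n)) atTop (𝓝 0) ∧
    ∃ (r : ℕ → Hsm → Hsm → ℝ) (ρXY : H → H → ℝ),
      (∀ n u v, |r n u v| ≤ 1) ∧ (∀ u v, |ρXY u v| ≤ 1) ∧
      (∀ n u v, g n u v = r n u v * Real.sqrt (sX n u) * Real.sqrt (sY n v)) ∧
      (∀ u v : H, gam G12 u v = ρXY u v * Real.sqrt (sigSq G11 u) * Real.sqrt (sigSq G22 v)) ∧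
      Tendsto (fun n => sSup {x : ℝ | ∃ u v : Hsm, (u : H) ∈ Hd ξ (dn n) ∧
        (v : H) ∈ Hd ξ (dn n) ∧ sigSq G11 (u : H) + τ n * Psi D u = 1 ∧
        sigSq G22 (v : H) + τ n * Psi D v = 1 ∧
        x = |r n u v - ρXY (u : H) (v : H)|}) atTop (𝓝 0)

/-- `ζ_n` (resp. `ν_n` with `G = Γ₂₂`): sup over unit vectors of `H_sm`. -/
noncomputable def zeta (G : H →L[ℝ] H) {Hsm : Submodule ℝ H} (s : Hsm → ℝ) : ℝ :=
  sSup {x : ℝ | ∃ u : Hsm, ‖(u : H)‖ = 1 ∧ x = |s u - sigSq G (u : H)|}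

/-- `η_n`. -/
noncomputable def eta (G12 : H →L[ℝ] H) {Hsm : Submodule ℝ H} (g : Hsm → Hsm → ℝ) : ℝ :=
  sSup {x : ℝ | ∃ u v : Hsm, ‖(u : H)‖ = 1 ∧ ‖(v : H)‖ = 1 ∧
    x = |g u v - gam G12 (u : H) (v : H)|}

/-- `ℓᵢ(τ) = inf {⟪u, Γᵢᵢ u⟫ + τ Ψ(u) : u ∈ H_sm, ‖u‖ = 1}`. -/
noncomputable def ell (G : H →L[ℝ] H) {Hsm : Submodule ℝ H} (D : Hsm →ₗ[ℝ] H)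
    (τ : ℝ) : ℝ :=
  sInf {x : ℝ | ∃ u : Hsm, ‖(u : H)‖ = 1 ∧ x = sigSq G (u : H) + τ * Psi D u}

section Association

variable {G11 G12 G21 G22 : H →L[ℝ] H}

theorem C1.sigSq_left_nonneg (hC1 : C1 G11 G12 G21 G22) (u : H) : 0 ≤ sigSq G11 u := by
  simpa [sigSq] using hC1.pos u 0

theorem C1.sigSq_right_nonneg (hC1 : C1 G11 G12 G21 G22) (v : H) : 0 ≤ sigSq G22 v := by
  simpa [sigSq] using hC1.pos 0 v

theorem C1.gam_sq_le (hC1 : C1 G11 G12 G21 G22) (u v : H) :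
    gam G12 u v ^ 2 ≤ sigSq G11 u * sigSq G22 v := by
  have hquad : ∀ t : ℝ,
      0 ≤ sigSq G11 u * (t * t) + (2 * gam G12 u v) * t + sigSq G22 v := by
    intro t
    have := hC1.pos (t • u) v
    simp only [map_smul, real_inner_smul_left, real_inner_smul_right] at this
    simp only [sigSq, gam]
    linarith
  have := discrim_le_zero hquad
  rw [discrim] at this
  linarith

theorem C1.Lfun_nonneg (hC1 : C1 G11 G12 G21 G22) (u v : H) : 0 ≤ Lfun G11 G12 G22 u v :=
  div_nonneg (sq_nonneg _) (mul_nonneg (hC1.sigSq_left_nonneg u) (hC1.sigSq_right_nonneg v))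

theorem C1.Lfun_le_one (hC1 : C1 G11 G12 G21 G22) (u v : H) : Lfun G11 G12 G22 u v ≤ 1 :=
  div_le_one_of_le₀ (hC1.gam_sq_le u v)
    (mul_nonneg (hC1.sigSq_left_nonneg u) (hC1.sigSq_right_nonneg v))

theorem C1.Lfun_le_lam0 (hC1 : C1 G11 G12 G21 G22) (u v : H) :
    Lfun G11 G12 G22 u v ≤ lam0 G11 G12 G22 :=
  le_csSup ⟨1, by rintro x ⟨u, v, rfl⟩; exact hC1.Lfun_le_one u v⟩ ⟨u, v, rfl⟩

theorem C1.lam0_nonneg (hC1 : C1 G11 G12 G21 G22) : 0 ≤ lam0 G11 G12 G22 :=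
  (hC1.Lfun_nonneg 0 0).trans (hC1.Lfun_le_lam0 0 0)

theorem Psi_nonneg {Hsm : Submodule ℝ H} (D : Hsm →ₗ[ℝ] H) (u : Hsm) : 0 ≤ Psi D u :=
  sq_nonneg _

theorem C1.Lpen_le_Lfun (hC1 : C1 G11 G12 G21 G22) {Hsm : Submodule ℝ H}
    (D : Hsm →ₗ[ℝ] H) {τ : ℝ} (hτ : 0 ≤ τ) (u v : Hsm) :
    Lpen G11 G12 G22 D τ u v ≤ Lfun G11 G12 G22 (u : H) (v : H) := by
  have hX := hC1.sigSq_left_nonneg (u : H)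
  have hY := hC1.sigSq_right_nonneg (v : H)
  have hPu := mul_nonneg hτ (Psi_nonneg D u)
  have hPv := mul_nonneg hτ (Psi_nonneg D v)
  rcases (mul_nonneg hX hY).eq_or_lt with hzero | hpos
  · have hgam : gam G12 (u : H) (v : H) = 0 := by
      have := hC1.gam_sq_le (u : H) (v : H)
      rw [← hzero] at this
      exact pow_eq_zero_iff two_ne_zero |>.mp (le_antisymm this (sq_nonneg _))
    simp [Lpen, Lfun, hgam]
  · exact div_le_div_of_nonneg_left (sq_nonneg _) hpos
      (mul_le_mul (by linarith) (by linarith) hY (by linarith))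

theorem C1.Lpen_le_lam0 (hC1 : C1 G11 G12 G21 G22) {Hsm : Submodule ℝ H}
    (D : Hsm →ₗ[ℝ] H) {τ : ℝ} (hτ : 0 ≤ τ) (u v : Hsm) :
    Lpen G11 G12 G22 D τ u v ≤ lam0 G11 G12 G22 :=
  (hC1.Lpen_le_Lfun D hτ u v).trans (hC1.Lfun_le_lam0 _ _)

end Association

section Homogeneity

theorem sigSq_smul (G : H →L[ℝ] H) (a : ℝ) (u : H) : sigSq G (a • u) = a ^ 2 * sigSq G u := by
  simp only [sigSq, map_smul, real_inner_smul_left, real_inner_smul_right]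
  ring

theorem gam_smul_smul (G12 : H →L[ℝ] H) (a b : ℝ) (u v : H) :
    gam G12 (a • u) (b • v) = a * b * gam G12 u v := by
  simp only [gam, map_smul, real_inner_smul_left, real_inner_smul_right]
  ring

theorem Psi_smul {Hsm : Submodule ℝ H} (D : Hsm →ₗ[ℝ] H) (a : ℝ) (u : Hsm) :
    Psi D (a • u) = a ^ 2 * Psi D u := by
  simp only [Psi, map_smul, norm_smul, mul_pow, Real.norm_eq_abs, sq_abs]

theorem Lpen_smul_smul (G11 G12 G22 : H →L[ℝ] H) {Hsm : Submodule ℝ H} (D : Hsm →ₗ[ℝ] H)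
    (τ : ℝ) {a b : ℝ} (ha : a ≠ 0) (hb : b ≠ 0) (u v : Hsm) :
    Lpen G11 G12 G22 D τ (a • u) (b • v) = Lpen G11 G12 G22 D τ u v := by
  simp only [Lpen, Submodule.coe_smul, gam_smul_smul, sigSq_smul, Psi_smul]
  rw [show (a * b * gam G12 u v) ^ 2 = (a ^ 2 * b ^ 2) * gam G12 u v ^ 2 by ring,
    show (a ^ 2 * sigSq G11 u + τ * (a ^ 2 * Psi D u)) *
        (b ^ 2 * sigSq G22 v + τ * (b ^ 2 * Psi D v)) =
      (a ^ 2 * b ^ 2) * ((sigSq G11 u + τ * Psi D u) * (sigSq G22 v + τ * Psi D v)) by ring]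
  exact mul_div_mul_left _ _ (by positivity)

end Homogeneity

theorem tendsto_Lpen {ι : Type*} {l : Filter ι} (G11 G12 G22 : H →L[ℝ] H)
    {Hsm : Submodule ℝ H} (D : Hsm →ₗ[ℝ] H) {τ : ι → ℝ} {u v : ι → Hsm} {x y : H}
    (hu : Tendsto (fun n => (u n : H)) l (𝓝 x)) (hv : Tendsto (fun n => (v n : H)) l (𝓝 y))
    (hpu : Tendsto (fun n => τ n * Psi D (u n)) l (𝓝 0))
    (hpv : Tendsto (fun n => τ n * Psi D (v n)) l (𝓝 0))
    (hxy : sigSq G11 x * sigSq G22 y ≠ 0) :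
    Tendsto (fun n => Lpen G11 G12 G22 D (τ n) (u n) (v n)) l
      (𝓝 (Lfun G11 G12 G22 x y)) := by
  have hsig : ∀ G : H →L[ℝ] H, Continuous (sigSq G) := fun G =>
    continuous_id.inner G.continuous
  have hgam : Tendsto (fun n => gam G12 (u n) (v n)) l (𝓝 (gam G12 x y)) :=
    hu.inner ((G12.continuous.tendsto y).comp hv)
  have hX : Tendsto (fun n => sigSq G11 (u n) + τ n * Psi D (u n)) l (𝓝 (sigSq G11 x)) := by
    simpa using ((hsig G11).tendsto x |>.comp hu).add hpu
  have hY : Tendsto (fun n => sigSq G22 (v n) + τ n * Psi D (v n)) l (𝓝 (sigSq G22 y)) := by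
    simpa using ((hsig G22).tendsto y |>.comp hv).add hpv
  exact (hgam.pow 2).div (hX.mul hY) hxy

section Sieve

theorem coe_projSm {Hsm : Submodule ℝ H} (ξ : ℕ → H) (hξ : ∀ i, ξ i ∈ Hsm) (d : ℕ) (u : H) :
    (projSm ξ hξ d u : H) = ∑ i ∈ Finset.range d, ⟪ξ i, u⟫ • ξ i := by
  simp [projSm]

theorem projSm_mem_Hd {Hsm : Submodule ℝ H} (ξ : ℕ → H) (hξ : ∀ i, ξ i ∈ Hsm) (d : ℕ)
    (u : H) : (projSm ξ hξ d u : H) ∈ Hd ξ d := by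
  rw [coe_projSm]
  exact Submodule.sum_mem _ fun i hi =>
    Submodule.smul_mem _ _ (Submodule.subset_span ⟨i, Finset.mem_range.mp hi, rfl⟩)

theorem _root_.Orthonormal.tendsto_sum_range_inner_smul [CompleteSpace H] {ξ : ℕ → H}
    (hξ : Orthonormal ℝ ξ) (hsp : (Submodule.span ℝ (Set.range ξ)).topologicalClosure = ⊤)
    (u : H) : Tendsto (fun d => ∑ i ∈ Finset.range d, ⟪ξ i, u⟫ • ξ i) atTop (𝓝 u) := by
  let b : HilbertBasis ℕ ℝ H := HilbertBasis.mk hξ hsp.ge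
  have hb : ⇑b = ξ := HilbertBasis.coe_mk hξ hsp.ge
  simpa only [b.repr_apply_apply, hb] using (b.hasSum_repr u).tendsto_sum_nat

theorem SieveSetup.tendsto_projSm [CompleteSpace H] {Hsm : Submodule ℝ H} {ξ : ℕ → H}
    {dn : ℕ → ℕ} (hS : SieveSetup Hsm ξ dn) (u : H) :
    Tendsto (fun n => (projSm ξ hS.mem (dn n) u : H)) atTop (𝓝 u) := by
  simpa only [coe_projSm, Function.comp_def] using
    (hS.orth.tendsto_sum_range_inner_smul hS.total u).comp hS.dn_tendsto

/-- The sieve supremum `λ_κ`. -/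
noncomputable def lamSieve (G11 G12 G22 : H →L[ℝ] H) {Hsm : Submodule ℝ H}
    (D : Hsm →ₗ[ℝ] H) (ξ : ℕ → H) (d : ℕ) (τ : ℝ) : ℝ :=
  sSup {x : ℝ | ∃ u v : Hsm, (u : H) ∈ Hd ξ d ∧ (v : H) ∈ Hd ξ d ∧ u ≠ 0 ∧ v ≠ 0 ∧
    x = Lpen G11 G12 G22 D τ u v}

variable {G11 G12 G21 G22 : H →L[ℝ] H} {Hsm : Submodule ℝ H} {D : Hsm →ₗ[ℝ] H}
  {ξ : ℕ → H} {d : ℕ} {τ : ℝ}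

theorem C1.lamSieve_le_lam0 (hC1 : C1 G11 G12 G21 G22) (hτ : 0 ≤ τ) :
    lamSieve G11 G12 G22 D ξ d τ ≤ lam0 G11 G12 G22 :=
  Real.sSup_le (by rintro x ⟨u, v, -, -, -, -, rfl⟩; exact hC1.Lpen_le_lam0 D hτ u v)
    hC1.lam0_nonneg

theorem C1.Lpen_le_lamSieve (hC1 : C1 G11 G12 G21 G22) (hτ : 0 ≤ τ) {u v : Hsm}
    (hu : (u : H) ∈ Hd ξ d) (hv : (v : H) ∈ Hd ξ d) (hu0 : u ≠ 0) (hv0 : v ≠ 0) :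
    Lpen G11 G12 G22 D τ u v ≤ lamSieve G11 G12 G22 D ξ d τ :=
  le_csSup ⟨lam0 G11 G12 G22, by
      rintro x ⟨u, v, -, -, -, -, rfl⟩; exact hC1.Lpen_le_lam0 D hτ u v⟩
    ⟨u, v, hu, hv, hu0, hv0, rfl⟩

end Sieve

theorem statement14_general [CompleteSpace H]
    (G11 G12 G21 G22 : H →L[ℝ] H) {Hsm : Submodule ℝ H} (D : Hsm →ₗ[ℝ] H)
    (ξ : ℕ → H) (dn : ℕ → ℕ) (τ : ℕ → ℝ)
    (hC1 : C1 G11 G12 G21 G22) (φ₁ ψ₁ : Hsm)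
    (hmax : Lfun G11 G12 G22 (φ₁ : H) (ψ₁ : H) = lam0 G11 G12 G22)
    (hX : 0 < sigSq G11 (φ₁ : H)) (hY : 0 < sigSq G22 (ψ₁ : H))
    (hSieve : SieveSetup Hsm ξ dn)
    (hτ0 : ∀ n, 0 ≤ τ n)
    (hpφ : Tendsto (fun n => τ n * Psi D (projSm ξ hSieve.mem (dn n) (φ₁ : H)))
      atTop (𝓝 0))
    (hpψ : Tendsto (fun n => τ n * Psi D (projSm ξ hSieve.mem (dn n) (ψ₁ : H)))
      atTop (𝓝 0)) :
    Tendsto (fun n => Lpen G11 G12 G22 D (τ n)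
        ((‖(projSm ξ hSieve.mem (dn n) (φ₁ : H) : H)‖)⁻¹ •
          projSm ξ hSieve.mem (dn n) (φ₁ : H))
        ((‖(projSm ξ hSieve.mem (dn n) (ψ₁ : H) : H)‖)⁻¹ •
          projSm ξ hSieve.mem (dn n) (ψ₁ : H)))
      atTop (𝓝 (lam0 G11 G12 G22)) ∧
      Tendsto (fun n => sSup {x : ℝ | ∃ u v : Hsm, (u : H) ∈ Hd ξ (dn n) ∧
          (v : H) ∈ Hd ξ (dn n) ∧ u ≠ 0 ∧ v ≠ 0 ∧
          x = Lpen G11 G12 G22 D (τ n) u v}) atTop (𝓝 (lam0 G11 G12 G22)) := by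
  set pφ := fun n => projSm ξ hSieve.mem (dn n) (φ₁ : H)
  set pψ := fun n => projSm ξ hSieve.mem (dn n) (ψ₁ : H)
  have hφ : Tendsto (fun n => (pφ n : H)) atTop (𝓝 φ₁) := hSieve.tendsto_projSm φ₁
  have hψ : Tendsto (fun n => (pψ n : H)) atTop (𝓝 ψ₁) := hSieve.tendsto_projSm ψ₁
  have hlim : Tendsto (fun n => Lpen G11 G12 G22 D (τ n) (pφ n) (pψ n)) atTop
      (𝓝 (lam0 G11 G12 G22)) :=
    hmax ▸ tendsto_Lpen G11 G12 G22 D hφ hψ hpφ hpψ (mul_pos hX hY).ne'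
  have hφ0 : ∀ᶠ n in atTop, (pφ n : H) ≠ 0 :=
    hφ.eventually_ne fun h => hX.ne' (by simp [sigSq, h])
  have hψ0 : ∀ᶠ n in atTop, (pψ n : H) ≠ 0 :=
    hψ.eventually_ne fun h => hY.ne' (by simp [sigSq, h])
  refine ⟨hlim.congr' ?_, ?_⟩
  · filter_upwards [hφ0, hψ0] with n hφn hψn
    exact (Lpen_smul_smul G11 G12 G22 D (τ n) (inv_ne_zero (norm_ne_zero_iff.mpr hφn))
      (inv_ne_zero (norm_ne_zero_iff.mpr hψn)) (pφ n) (pψ n)).symm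
  · refine tendsto_of_tendsto_of_tendsto_of_le_of_le' hlim tendsto_const_nhds ?_
      (Eventually.of_forall fun n => hC1.lamSieve_le_lam0 (hτ0 n))
    filter_upwards [hφ0, hψ0] with n hφn hψn
    exact hC1.Lpen_le_lamSieve (hτ0 n) (projSm_mem_Hd ξ hSieve.mem _ _) (projSm_mem_Hd ξ hSieve.mem _ _)
      (by simpa using hφn) (by simpa using hψn)

/-- key step in the proof of Theorem 2(a): the penalized association of
the normalized projections of `(φ₁, ψ₁)` onto `H_{d_n}` converges to `λ₀`, and hence
`λ_{κ_n} → λ₀`. -/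
theorem statement14 [CompleteSpace H] [TopologicalSpace.SeparableSpace H]
    (G11 G12 G21 G22 : H →L[ℝ] H) {Hsm : Submodule ℝ H} (D : Hsm →ₗ[ℝ] H)
    (ξ : ℕ → H) (dn : ℕ → ℕ) (τ : ℕ → ℝ)
    (hC1 : C1 G11 G12 G21 G22) (φ₁ ψ₁ : Hsm)
    (hφn : ‖(φ₁ : H)‖ = 1) (hψn : ‖(ψ₁ : H)‖ = 1)
    (hmax : Lfun G11 G12 G22 (φ₁ : H) (ψ₁ : H) = lam0 G11 G12 G22)
    (hX : 0 < sigSq G11 (φ₁ : H)) (hY : 0 < sigSq G22 (ψ₁ : H))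
    (hSieve : SieveSetup Hsm ξ dn)
    (hτ0 : ∀ n, 0 ≤ τ n) (hτ : Tendsto τ atTop (𝓝 0))
    (hpφ : Tendsto (fun n => τ n * Psi D (projSm ξ hSieve.mem (dn n) (φ₁ : H)))
      atTop (𝓝 0))
    (hpψ : Tendsto (fun n => τ n * Psi D (projSm ξ hSieve.mem (dn n) (ψ₁ : H)))
      atTop (𝓝 0)) :
    Tendsto (fun n => Lpen G11 G12 G22 D (τ n)
        ((‖(projSm ξ hSieve.mem (dn n) (φ₁ : H) : H)‖)⁻¹ •
          projSm ξ hSieve.mem (dn n) (φ₁ : H))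
        ((‖(projSm ξ hSieve.mem (dn n) (ψ₁ : H) : H)‖)⁻¹ •
          projSm ξ hSieve.mem (dn n) (ψ₁ : H)))
      atTop (𝓝 (lam0 G11 G12 G22)) ∧
      Tendsto (fun n => sSup {x : ℝ | ∃ u v : Hsm, (u : H) ∈ Hd ξ (dn n) ∧
          (v : H) ∈ Hd ξ (dn n) ∧ u ≠ 0 ∧ v ≠ 0 ∧
          x = Lpen G11 G12 G22 D (τ n) u v}) atTop (𝓝 (lam0 G11 G12 G22)) :=
  statement14_general G11 G12 G21 G22 D ξ dn τ hC1 φ₁ ψ₁ hmax hX hY hSieve hτ0 hpφ hpψ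
end RSCCA
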